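/- arXiv:2207.10250 — 5 statements merged into one kernel-verified Lean document; each statement's English description precedes it below -/
import Mathlib

section
/- (Projection-lemma lower bound.) Let H_0 be a positive semidefinite Hermitian operator on a finite-dimensional complex inner product space whose kernel is one-dimensional and spanned by a unit vector ψ, and suppose the smallest non-zero eigenvalue of H_0 is at least μ > 0. Let V be a Hermitian operator and Δ > 0 with Δμ > 2‖V‖ (operator norm). Then λ_0(Δ H_0 + V) ≥ ⟨ψ, V ψ⟩ − ‖V‖²/(Δμ − 2‖V‖). -/
open scoped InnerProductSpace ComplexOrder

/-- Eigenvalues of a Hermitian matrix, listed in non-decreasing order with multiplicity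
(junk value `0` for non-Hermitian matrices). -/
noncomputable def eigs {N : ℕ} (A : Matrix (Fin N) (Fin N) ℂ) : Fin N → ℝ :=
  if hA : A.IsHermitian then hA.eigenvalues ∘ Tuple.sort hA.eigenvalues else 0

/-- The operator norm of a matrix, acting on Euclidean space. -/
noncomputable def opNorm {N : ℕ} (A : Matrix (Fin N) (Fin N) ℂ) : ℝ :=
  ‖Matrix.toEuclideanCLM (𝕜 := ℂ) (n := Fin N) A‖

/-! Split a unit vector as `x = α ψ + w` with `w ⟂ ψ`, so `|α|² + ‖w‖² = 1`. Since `H₀ ψ = 0` and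
`H₀ ≥ μ` on `ψ^⟂`, `⟪x, (Δ H₀ + V) x⟫ ≥ Δ μ ‖w‖² + |α|² ⟪ψ, V ψ⟫ - ‖V‖ (2 |α| ‖w‖ + ‖w‖²)`.
Bounding `|α|² ⟪ψ, V ψ⟫ ≥ ⟪ψ, V ψ⟫ - ‖V‖ ‖w‖²` and `|α| ≤ 1` leaves
`⟪ψ, V ψ⟫ + (Δ μ - 2‖V‖) s² - 2 ‖V‖ s` with `s = ‖w‖`, whose minimum over `s` is
`⟪ψ, V ψ⟫ - ‖V‖² / (Δ μ - 2‖V‖)`. The smallest eigenvalue is the quadratic form at a unit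
eigenvector. -/

open Module.End

theorem sub_sq_div_le_of_sq_add_sq_eq_one {a s b c g : ℝ} (ha : 0 ≤ a) (hs : 0 ≤ s) (hg : 0 < g)
    (hc : |c| ≤ b) (h : a ^ 2 + s ^ 2 = 1) :
    c - b ^ 2 / g ≤ (g + 2 * b) * s ^ 2 + (a ^ 2 * c - b * (2 * a * s + s ^ 2)) := by
  have hb : 0 ≤ b := (abs_nonneg c).trans hc
  have ha1 : a ≤ 1 := by nlinarith
  have hsq : 0 ≤ g * s ^ 2 - 2 * b * s + b ^ 2 / g := by
    have e : g * s ^ 2 - 2 * b * s + b ^ 2 / g = (g * s - b) ^ 2 / g := by field_simp; ring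
    rw [e]; positivity
  nlinarith [abs_le.1 hc, mul_nonneg (sub_nonneg.2 ha1) (mul_nonneg hb hs)]

section InnerProductSpace

variable {𝕜 E : Type*} [RCLike 𝕜] [NormedAddCommGroup E] [InnerProductSpace 𝕜 E]

theorem Module.End.HasEigenvalue.le_re_of_forall_le_re_inner {T : E →ₗ[𝕜] E} {μ : 𝕜}
    (hμ : HasEigenvalue T μ) {c : ℝ} (h : ∀ x : E, ‖x‖ = 1 → c ≤ RCLike.re ⟪x, T x⟫_𝕜) :
    c ≤ RCLike.re μ := by
  obtain ⟨v, hv⟩ := hμ.exists_hasEigenvector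
  have hx : ‖(‖v‖⁻¹ : 𝕜) • v‖ = 1 := norm_smul_inv_norm hv.2
  have hTx : T ((‖v‖⁻¹ : 𝕜) • v) = μ • (‖v‖⁻¹ : 𝕜) • v := by
    rw [map_smul, hv.apply_eq_smul, smul_comm]
  have hc := h _ hx
  rwa [inner_product_apply_eigenvector hTx, hx, RCLike.ofReal_one, one_pow, mul_one] at hc

theorem ContinuousLinearMap.norm_inner_map_le (V : E →L[𝕜] E) (y z : E) :
    ‖⟪y, V z⟫_𝕜‖ ≤ ‖V‖ * (‖y‖ * ‖z‖) :=
  calc ‖⟪y, V z⟫_𝕜‖ ≤ ‖y‖ * ‖V z‖ := norm_inner_le_norm _ _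
    _ ≤ ‖y‖ * (‖V‖ * ‖z‖) := by gcongr; exact V.le_opNorm z
    _ = ‖V‖ * (‖y‖ * ‖z‖) := by ring

theorem ContinuousLinearMap.re_inner_sub_le_re_inner_add_map_add (V : E →L[𝕜] E) (u w : E) :
    RCLike.re ⟪u, V u⟫_𝕜 - ‖V‖ * (2 * ‖u‖ * ‖w‖ + ‖w‖ ^ 2)
      ≤ RCLike.re ⟪u + w, V (u + w)⟫_𝕜 := by
  have cross (y z : E) : -(‖V‖ * (‖y‖ * ‖z‖)) ≤ RCLike.re ⟪y, V z⟫_𝕜 :=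
    (neg_le_neg (V.norm_inner_map_le y z)).trans (neg_le_of_abs_le (RCLike.abs_re_le_norm _))
  have expand : ⟪u + w, V (u + w)⟫_𝕜 = ⟪u, V u⟫_𝕜 + ⟪u, V w⟫_𝕜 + ⟪w, V u⟫_𝕜 + ⟪w, V w⟫_𝕜 := by
    simp only [map_add, inner_add_left, inner_add_right]; ring
  rw [expand]
  simp only [map_add]
  linarith [cross u w, cross w u, cross w w]

theorem LinearMap.IsSymmetric.inner_add_map_add_of_map_eq_zero {H : E →ₗ[𝕜] E}
    (hH : H.IsSymmetric) {u : E} (hu : H u = 0) (w : E) :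
    ⟪u + w, H (u + w)⟫_𝕜 = ⟪w, H w⟫_𝕜 := by
  rw [map_add, hu, zero_add, inner_add_left, ← hH u w, hu, inner_zero_left, zero_add]

theorem LinearMap.IsSymmetric.mul_norm_sq_le_re_inner_map_self [FiniteDimensional 𝕜 E]
    {T : E →ₗ[𝕜] E} (hT : T.IsSymmetric) {μ : ℝ}
    (hμ : ∀ ev : ℝ, HasEigenvalue T ev → ev ≠ 0 → μ ≤ ev) {w : E}
    (hw : w ∈ (LinearMap.ker T)ᗮ) :
    μ * ‖w‖ ^ 2 ≤ RCLike.re ⟪w, T w⟫_𝕜 := by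
  set b := hT.eigenvectorBasis rfl
  set ev := hT.eigenvalues rfl
  have hnorm : ‖w‖ ^ 2 = ∑ i, ‖b.repr w i‖ ^ 2 := by
    rw [← b.repr.norm_map, EuclideanSpace.norm_sq_eq]
  have hquad : RCLike.re ⟪w, T w⟫_𝕜 = ∑ i, ev i * ‖b.repr w i‖ ^ 2 := by
    rw [← b.repr.inner_map_map, PiLp.inner_apply, map_sum]
    refine Finset.sum_congr rfl fun i _ => ?_
    rw [hT.eigenvectorBasis_apply_self_apply, RCLike.inner_apply, mul_assoc, RCLike.mul_conj,
      ← RCLike.ofReal_pow, ← RCLike.ofReal_mul, RCLike.ofReal_re]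
  rw [hnorm, hquad, Finset.mul_sum]
  refine Finset.sum_le_sum fun i _ => ?_
  by_cases h0 : ev i = 0
  · have hbi : b i ∈ LinearMap.ker T := by
      rw [LinearMap.mem_ker, hT.apply_eigenvectorBasis rfl i]
      simp [ev, h0]
    have : b.repr w i = 0 := by
      rw [b.repr_apply_apply]
      exact (Submodule.mem_orthogonal _ _).1 hw _ hbi
    simp [this, h0]
  · exact mul_le_mul_of_nonneg_right (hμ _ (hT.hasEigenvalue_eigenvalues rfl i) h0) (sq_nonneg _)

theorem projection_lemma_le_re_inner {H : E →ₗ[𝕜] E} (hH : H.IsSymmetric) (V : E →L[𝕜] E)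
    {ψ : E} (hψ : ‖ψ‖ = 1) (hHψ : H ψ = 0) {μ Δ : ℝ}
    (hHw : ∀ w : E, ⟪ψ, w⟫_𝕜 = 0 → μ * ‖w‖ ^ 2 ≤ RCLike.re ⟪w, H w⟫_𝕜) (hΔ : 0 ≤ Δ)
    (hVΔ : 2 * ‖V‖ < Δ * μ) {x : E} (hx : ‖x‖ = 1) :
    RCLike.re ⟪ψ, V ψ⟫_𝕜 - ‖V‖ ^ 2 / (Δ * μ - 2 * ‖V‖)
      ≤ Δ * RCLike.re ⟪x, H x⟫_𝕜 + RCLike.re ⟪x, V x⟫_𝕜 := by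
  set α := ⟪ψ, x⟫_𝕜
  set w := x - α • ψ
  have hψw : ⟪ψ, w⟫_𝕜 = 0 := by
    rw [inner_sub_right, inner_smul_right, inner_self_eq_norm_sq_to_K, hψ]; simp [α]
  have hxw : x = α • ψ + w := (add_sub_cancel _ _).symm
  have hαψ : ‖α • ψ‖ = ‖α‖ := by rw [norm_smul, hψ, mul_one]
  have hpyth : ‖α‖ ^ 2 + ‖w‖ ^ 2 = 1 := by
    have := norm_add_sq_eq_norm_sq_add_norm_sq_of_inner_eq_zero (α • ψ) w
      (by rw [inner_smul_left, hψw, mul_zero])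
    rw [← hxw, hx, hαψ] at this
    linear_combination -this
  have hHx : RCLike.re ⟪x, H x⟫_𝕜 = RCLike.re ⟪w, H w⟫_𝕜 := by
    rw [hxw, hH.inner_add_map_add_of_map_eq_zero (by rw [map_smul, hHψ, smul_zero])]
  have hVx := V.re_inner_sub_le_re_inner_add_map_add (α • ψ) w
  have hαVα : RCLike.re ⟪α • ψ, V (α • ψ)⟫_𝕜 = ‖α‖ ^ 2 * RCLike.re ⟪ψ, V ψ⟫_𝕜 := by
    rw [map_smul, inner_smul_left, inner_smul_right, ← mul_assoc, RCLike.conj_mul,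
      ← RCLike.ofReal_pow, RCLike.re_ofReal_mul]
  have hc : |RCLike.re ⟪ψ, V ψ⟫_𝕜| ≤ ‖V‖ :=
    (RCLike.abs_re_le_norm _).trans (by simpa [hψ] using V.norm_inner_map_le ψ ψ)
  rw [← hxw, hαψ, hαVα] at hVx
  have hscalar := sub_sq_div_le_of_sq_add_sq_eq_one (norm_nonneg α) (norm_nonneg w)
    (sub_pos.2 hVΔ) hc hpyth
  rw [hHx]
  linarith [hscalar, mul_le_mul_of_nonneg_left (hHw w hψw) hΔ]

end InnerProductSpace

namespace Matrix

namespace IsHermitian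

variable {N : ℕ} {A : Matrix (Fin N) (Fin N) ℂ}

theorem range_eigs (hA : A.IsHermitian) :
    Set.range (eigs A) =
      Set.range ((isSymmetric_toEuclideanLin_iff.mpr hA).eigenvalues finrank_euclideanSpace) := by
  rw [eigs, dif_pos hA, EquivLike.range_comp]
  exact EquivLike.range_comp _ _

theorem hasEigenvalue_toEuclideanLin_iff_mem_range_eigs (hA : A.IsHermitian) {ev : ℝ} :
    HasEigenvalue (toEuclideanLin A) (ev : ℂ) ↔ ev ∈ Set.range (eigs A) := by
  set hT := isSymmetric_toEuclideanLin_iff.mpr hA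
  rw [hA.range_eigs]
  constructor
  · intro h
    obtain ⟨i, hi⟩ := hT.exists_eigenvalues_eq finrank_euclideanSpace h
    exact ⟨i, RCLike.ofReal_inj.1 hi⟩
  · rintro ⟨i, rfl⟩
    exact hT.hasEigenvalue_eigenvalues _ i

end IsHermitian

theorem re_inner_toEuclideanLin_real_smul_add {n : Type*} [Fintype n] [DecidableEq n]
    (A B : Matrix n n ℂ) (Δ : ℝ) (x : EuclideanSpace ℂ n) :
    RCLike.re ⟪x, toEuclideanLin ((Δ : ℂ) • A + B) x⟫_ℂ
      = Δ * RCLike.re ⟪x, toEuclideanLin A x⟫_ℂ + RCLike.re ⟪x, toEuclideanLin B x⟫_ℂ := by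
  rw [map_add, LinearMap.add_apply, inner_add_right, map_add, map_smul, LinearMap.smul_apply,
    inner_smul_right]
  simp only [RCLike.re_to_complex, Complex.re_ofReal_mul]

end Matrix

theorem projection_lemma_lower_bound_general
    (N : ℕ) (hN : 0 < N) (H0 V : Matrix (Fin N) (Fin N) ℂ)
    (hH0 : H0.PosSemidef) (hV : V.IsHermitian)
    (ψ : EuclideanSpace ℂ (Fin N)) (hψ : ‖ψ‖ = 1)
    (hker : ∀ v : Fin N → ℂ, H0.mulVec v = 0 ↔ ∃ c : ℂ, v = c • ψ)
    (μ : ℝ)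
    (hμ : ∀ i : Fin N, eigs H0 i ≠ 0 → μ ≤ eigs H0 i)
    (Δ : ℝ) (hΔ : 0 < Δ) (hgap : 2 * opNorm V < Δ * μ) :
    (⟪ψ, (WithLp.toLp 2 (V.mulVec ψ) : EuclideanSpace ℂ (Fin N))⟫_ℂ).re
        - (opNorm V) ^ 2 / (Δ * μ - 2 * opNorm V)
      ≤ eigs ((Δ : ℂ) • H0 + V) ⟨0, hN⟩ := by
  have hH0sym := Matrix.isSymmetric_toEuclideanLin_iff.mpr hH0.1
  have hkerψ : LinearMap.ker (Matrix.toEuclideanLin H0) = ℂ ∙ ψ := by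
    ext u
    rw [LinearMap.mem_ker, Submodule.mem_span_singleton, Matrix.toLpLin_apply,
      WithLp.toLp_eq_zero, hker]
    simp only [← WithLp.ofLp_smul]
    exact exists_congr fun c => (WithLp.ofLp_injective 2).eq_iff.trans eq_comm
  have hH0ψ : Matrix.toEuclideanLin H0 ψ = 0 := hkerψ.ge (Submodule.mem_span_singleton_self ψ)
  have hH0gap : ∀ w, ⟪ψ, w⟫_ℂ = 0 → μ * ‖w‖ ^ 2 ≤ (⟪w, Matrix.toEuclideanLin H0 w⟫_ℂ).re := by
    intro w hψw
    refine hH0sym.mul_norm_sq_le_re_inner_map_self (fun ev hev hne => ?_) ?_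
    · obtain ⟨i, rfl⟩ := hH0.1.hasEigenvalue_toEuclideanLin_iff_mem_range_eigs.1 hev
      exact hμ i hne
    · rwa [hkerψ, Submodule.mem_orthogonal_singleton_iff_inner_right]
  have hM : ((Δ : ℂ) • H0 + V).IsHermitian := (hH0.1.smul (Complex.conj_ofReal Δ)).add hV
  refine (hM.hasEigenvalue_toEuclideanLin_iff_mem_range_eigs.2 ⟨⟨0, hN⟩, rfl⟩
    |>.le_re_of_forall_le_re_inner fun x hx => ?_).trans_eq (RCLike.ofReal_re _)
  rw [Matrix.re_inner_toEuclideanLin_real_smul_add]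
  exact projection_lemma_le_re_inner hH0sym (Matrix.toEuclideanCLM (𝕜 := ℂ) V) hψ hH0ψ hH0gap hΔ.le
    hgap hx

/-- projection-lemma lower bound: if `H_0 ⪰ 0` has one-dimensional kernel
spanned by the unit vector `ψ`, its smallest non-zero eigenvalue is ≥ `μ > 0`,
`V` is Hermitian and `Δ μ > 2‖V‖`, then
`λ_0(Δ H_0 + V) ≥ ⟨ψ, V ψ⟩ − ‖V‖²/(Δμ − 2‖V‖)`. -/
theorem projection_lemma_lower_bound
    (N : ℕ) (hN : 0 < N) (H0 V : Matrix (Fin N) (Fin N) ℂ)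
    (hH0 : H0.PosSemidef) (hV : V.IsHermitian)
    (ψ : EuclideanSpace ℂ (Fin N)) (hψ : ‖ψ‖ = 1)
    (hker : ∀ v : Fin N → ℂ, H0.mulVec v = 0 ↔ ∃ c : ℂ, v = c • ψ)
    (μ : ℝ) (hμpos : 0 < μ)
    (hμ : ∀ i : Fin N, eigs H0 i ≠ 0 → μ ≤ eigs H0 i)
    (Δ : ℝ) (hΔ : 0 < Δ) (hgap : 2 * opNorm V < Δ * μ) :
    (⟪ψ, (WithLp.toLp 2 (V.mulVec ψ) : EuclideanSpace ℂ (Fin N))⟫_ℂ).re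
        - (opNorm V) ^ 2 / (Δ * μ - 2 * opNorm V)
      ≤ eigs ((Δ : ℂ) • H0 + V) ⟨0, hN⟩ :=
  projection_lemma_lower_bound_general N hN H0 V hH0 hV ψ hψ hker μ hμ Δ hΔ hgap
end

section
/- Let H_0 be a positive semidefinite Hermitian operator on a finite-dimensional complex inner product space whose kernel is one-dimensional and spanned by a unit vector ψ, with smallest non-zero eigenvalue at least μ > 0. Let V be Hermitian and Δ > 0 with 2‖V‖ < Δμ. Then λ_0(Δ H_0 + V) is a non-degenerate eigenvalue, and any unit eigenvector g of Δ H_0 + V with eigenvalue λ_0(Δ H_0 + V) satisfies |⟨ψ, g⟩|² ≥ 1 − ‖V‖²/(Δμ − ‖V‖)². -/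
/-!
Write `A = Δ H₀ + V` and `λ` for its lowest eigenvalue. The Rayleigh quotient at `ψ` gives
`λ ≤ ⟪ψ, V ψ⟫ ≤ ‖V‖`. If `A g = λ g` and `w` is the component of `g` orthogonal to `ψ`, then
`H₀ w = H₀ g` because `H₀ ψ = 0`, and `H₀ ≥ μ` on `ψᗮ`, so
`λ ‖w‖² = Re ⟪w, A g⟫ ≥ Δ μ ‖w‖² - ‖V‖ ‖g‖ ‖w‖`, i.e. `(Δ μ - λ) ‖w‖ ≤ ‖V‖ ‖g‖`.
For a unit `g` this bounds `‖w‖` by `‖V‖ / (Δ μ - ‖V‖)`, and Pythagoras gives the overlap.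
A degenerate `λ` would have a nonzero eigenvector orthogonal to `ψ`, for which `w = g`, forcing
`Δ μ ≤ λ + ‖V‖ ≤ 2 ‖V‖`.
-/

open scoped InnerProductSpace ComplexOrder

section
variable {𝕜 E : Type*} [RCLike 𝕜] [NormedAddCommGroup E] [InnerProductSpace 𝕜 E]

theorem exists_ne_zero_inner_eq_zero_of_orthonormal {ι : Type*} {W : Submodule 𝕜 E} {v : ι → E}
    (hv : Orthonormal 𝕜 v) {i j : ι} (hij : i ≠ j) (hvi : v i ∈ W) (hvj : v j ∈ W) (ψ : E) :
    ∃ x ∈ W, x ≠ 0 ∧ ⟪ψ, x⟫_𝕜 = 0 := by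
  by_cases hψi : ⟪ψ, v i⟫_𝕜 = 0
  · exact ⟨v i, hvi, hv.ne_zero i, hψi⟩
  refine ⟨⟪ψ, v j⟫_𝕜 • v i - ⟪ψ, v i⟫_𝕜 • v j,
    W.sub_mem (W.smul_mem _ hvi) (W.smul_mem _ hvj), fun h => hψi ?_, ?_⟩
  · have := congrArg (⟪v j, ·⟫_𝕜) h
    simpa [inner_sub_right, inner_smul_right, hv.inner_eq_zero hij.symm, hv.1 j] using this
  · rw [inner_sub_right, inner_smul_right, inner_smul_right, mul_comm, sub_self]

theorem sub_mul_norm_starProjection_orthogonal_le {K : Submodule 𝕜 E} [K.HasOrthogonalProjection]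
    {H : E →ₗ[𝕜] E} {V : E →L[𝕜] E} {m lam : ℝ} {g : E} (hK : K ≤ LinearMap.ker H)
    (hH : ∀ w ∈ Kᗮ, m * ‖w‖ ^ 2 ≤ RCLike.re ⟪w, H w⟫_𝕜) (hg : H g + V g = (lam : 𝕜) • g) :
    (m - lam) * ‖Kᗮ.starProjection g‖ ≤ ‖V‖ * ‖g‖ := by
  rw [Submodule.starProjection_orthogonal_val]
  set w := g - K.starProjection g
  have hw : w ∈ Kᗮ := K.sub_starProjection_mem_orthogonal g
  have hHw : H w = H g := by
    rw [map_sub, hK (K.starProjection_apply_mem g), sub_zero]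
  have hwg : ⟪w, g⟫_𝕜 = ⟪w, w⟫_𝕜 := by
    rw [inner_sub_right, Submodule.inner_left_of_mem_orthogonal (K.starProjection_apply_mem g) hw,
      sub_zero]
  have hsplit : lam * ‖w‖ ^ 2 = RCLike.re ⟪w, H w⟫_𝕜 + RCLike.re ⟪w, V g⟫_𝕜 := by
    rw [hHw, ← map_add, ← inner_add_right, hg, inner_smul_right, hwg, inner_self_eq_norm_sq_to_K]
    norm_cast
  have hVg : |RCLike.re ⟪w, V g⟫_𝕜| ≤ ‖w‖ * (‖V‖ * ‖g‖) :=
    (RCLike.abs_re_le_norm _).trans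
      ((norm_inner_le_norm w (V g)).trans (by gcongr; exact V.le_opNorm g))
  have hquad : (m - lam) * ‖w‖ ^ 2 ≤ ‖V‖ * ‖g‖ * ‖w‖ := by
    nlinarith [hH w hw, (abs_le.mp hVg).1]
  rcases (norm_nonneg w).eq_or_lt with hw0 | hw0
  · rw [← hw0, mul_zero]; positivity
  · exact le_of_mul_le_mul_right (by nlinarith) hw0

theorem one_sub_sq_le_norm_inner_sq {ψ g : E} (hψ : ‖ψ‖ = 1) (hg : ‖g‖ = 1) {r : ℝ}
    (h : ‖(𝕜 ∙ ψ)ᗮ.starProjection g‖ ≤ r) :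
    1 - r ^ 2 ≤ ‖⟪ψ, g⟫_𝕜‖ ^ 2 := by
  have hpyth := Submodule.norm_sq_eq_add_norm_sq_starProjection g (𝕜 ∙ ψ)
  rw [Submodule.starProjection_unit_singleton 𝕜 hψ, norm_smul, hψ, mul_one, hg] at hpyth
  nlinarith [pow_le_pow_left₀ (norm_nonneg _) h 2]

variable {ι : Type*} [Fintype ι]

theorem OrthonormalBasis.re_inner_apply_self_eq_sum (b : OrthonormalBasis ι 𝕜 E)
    {T : E →ₗ[𝕜] E} {ev : ι → ℝ} (hT : ∀ i, T (b i) = (ev i : 𝕜) • b i) (x : E) :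
    RCLike.re ⟪x, T x⟫_𝕜 = ∑ i, ev i * ‖⟪b i, x⟫_𝕜‖ ^ 2 := by
  have hTx : T x = ∑ i, ((ev i : 𝕜) * ⟪b i, x⟫_𝕜) • b i := by
    conv_lhs => rw [← b.sum_repr' x]
    simp only [map_sum, map_smul, hT, smul_smul, mul_comm]
  rw [hTx, inner_sum, map_sum]
  refine Finset.sum_congr rfl fun i _ => ?_
  rw [inner_smul_right, ← inner_conj_symm x (b i), mul_assoc, RCLike.mul_conj,
    ← RCLike.ofReal_pow, ← RCLike.ofReal_mul, RCLike.ofReal_re]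

theorem OrthonormalBasis.mul_norm_sq_le_re_inner_apply_self (b : OrthonormalBasis ι 𝕜 E)
    {T : E →ₗ[𝕜] E} {ev : ι → ℝ} (hT : ∀ i, T (b i) = (ev i : 𝕜) • b i) {m : ℝ} {x : E}
    (hm : ∀ i, ⟪b i, x⟫_𝕜 ≠ 0 → m ≤ ev i) :
    m * ‖x‖ ^ 2 ≤ RCLike.re ⟪x, T x⟫_𝕜 := by
  rw [b.re_inner_apply_self_eq_sum hT, ← b.sum_sq_norm_inner_right, Finset.mul_sum]
  refine Finset.sum_le_sum fun i _ => ?_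
  by_cases hi : ⟪b i, x⟫_𝕜 = 0
  · simp [hi]
  · exact mul_le_mul_of_nonneg_right (hm i hi) (by positivity)

theorem OrthonormalBasis.mul_norm_sq_le_re_inner_apply_self_of_mem_orthogonal_ker
    (b : OrthonormalBasis ι 𝕜 E) {T : E →ₗ[𝕜] E} {ev : ι → ℝ}
    (hT : ∀ i, T (b i) = (ev i : 𝕜) • b i) {μ : ℝ} (hμ : ∀ i, ev i ≠ 0 → μ ≤ ev i) {w : E}
    (hw : w ∈ (LinearMap.ker T)ᗮ) :
    μ * ‖w‖ ^ 2 ≤ RCLike.re ⟪w, T w⟫_𝕜 := by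
  refine b.mul_norm_sq_le_re_inner_apply_self hT fun i hi => hμ i fun h0 => hi ?_
  exact Submodule.inner_right_of_mem_orthogonal (by simp [hT, h0]) hw

end

section
variable {𝕜 n : Type*} [RCLike 𝕜] [Fintype n] [DecidableEq n]

theorem Matrix.toEuclideanLin_eq_smul_iff {A : Matrix n n 𝕜} {x : EuclideanSpace 𝕜 n} {c : 𝕜} :
    toEuclideanLin A x = c • x ↔ A.mulVec x = c • x := by
  rw [← (WithLp.ofLp_injective 2).eq_iff]
  rfl

theorem Matrix.ker_toEuclideanLin_eq_span_singleton {A : Matrix n n 𝕜} {ψ : EuclideanSpace 𝕜 n}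
    (h : ∀ v, A.mulVec v = 0 ↔ ∃ c : 𝕜, v = c • ψ) :
    LinearMap.ker (toEuclideanLin A) = 𝕜 ∙ ψ := by
  ext v
  rw [LinearMap.mem_ker, Submodule.mem_span_singleton, ← WithLp.ofLp_eq_zero, ofLp_toLpLin,
    toLin'_apply, h]
  exact ⟨fun ⟨c, hc⟩ => ⟨c, (WithLp.ofLp_injective 2 hc).symm⟩, fun ⟨c, hc⟩ => ⟨c, hc ▸ rfl⟩⟩

theorem Matrix.IsHermitian.toEuclideanLin_eigenvectorBasis {A : Matrix n n 𝕜}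
    (hA : A.IsHermitian) (i : n) :
    toEuclideanLin A (hA.eigenvectorBasis i) = (hA.eigenvalues i : 𝕜) • hA.eigenvectorBasis i := by
  rw [toEuclideanLin_eq_smul_iff, hA.mulVec_eigenvectorBasis, RCLike.real_smul_eq_coe_smul (K := 𝕜)]

end

section
variable {N : ℕ} {A : Matrix (Fin N) (Fin N) ℂ}

theorem eigs_eq (hA : A.IsHermitian) (i : Fin N) :
    eigs A i = hA.eigenvalues (Tuple.sort hA.eigenvalues i) := by
  simp [eigs, hA]

theorem eigs_sort_symm (hA : A.IsHermitian) (j : Fin N) :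
    eigs A ((Tuple.sort hA.eigenvalues).symm j) = hA.eigenvalues j := by
  simp [eigs_eq hA]

theorem eigs_zero_le_eigenvalues (hA : A.IsHermitian) (hN : 0 < N) (j : Fin N) :
    eigs A ⟨0, hN⟩ ≤ hA.eigenvalues j := by
  rw [← eigs_sort_symm hA j, eigs_eq hA, eigs_eq hA]
  exact Tuple.monotone_sort hA.eigenvalues (Nat.zero_le _)

theorem eigs_zero_mul_norm_sq_le_re_inner (hA : A.IsHermitian) (hN : 0 < N)
    (x : EuclideanSpace ℂ (Fin N)) :
    eigs A ⟨0, hN⟩ * ‖x‖ ^ 2 ≤ RCLike.re ⟪x, Matrix.toEuclideanLin A x⟫_ℂ :=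
  hA.eigenvectorBasis.mul_norm_sq_le_re_inner_apply_self hA.toEuclideanLin_eigenvectorBasis
    fun j _ => eigs_zero_le_eigenvalues hA hN j

theorem eigs_zero_le_opNorm {H V : Matrix (Fin N) (Fin N) ℂ} (hHV : (H + V).IsHermitian)
    (hN : 0 < N) {ψ : EuclideanSpace ℂ (Fin N)} (hψ : ‖ψ‖ = 1)
    (hHψ : Matrix.toEuclideanLin H ψ = 0) :
    eigs (H + V) ⟨0, hN⟩ ≤ opNorm V := calc
  eigs (H + V) ⟨0, hN⟩ = eigs (H + V) ⟨0, hN⟩ * ‖ψ‖ ^ 2 := by rw [hψ, one_pow, mul_one]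
  _ ≤ RCLike.re ⟪ψ, Matrix.toEuclideanLin (H + V) ψ⟫_ℂ :=
    eigs_zero_mul_norm_sq_le_re_inner hHV hN ψ
  _ = RCLike.re ⟪ψ, Matrix.toEuclideanCLM (𝕜 := ℂ) V ψ⟫_ℂ := by
    rw [map_add, LinearMap.add_apply, hHψ, zero_add]
    rfl
  _ ≤ ‖ψ‖ * (opNorm V * ‖ψ‖) :=
    (re_inner_le_norm _ _).trans (by gcongr; exact ContinuousLinearMap.le_opNorm _ _)
  _ = opNorm V := by rw [hψ, mul_one, one_mul]

theorem mul_norm_sq_le_re_inner_of_mem_orthogonal_ker (hA : A.IsHermitian) {μ : ℝ}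
    (hμ : ∀ i, eigs A i ≠ 0 → μ ≤ eigs A i) {w : EuclideanSpace ℂ (Fin N)}
    (hw : w ∈ (LinearMap.ker (Matrix.toEuclideanLin A))ᗮ) :
    μ * ‖w‖ ^ 2 ≤ RCLike.re ⟪w, Matrix.toEuclideanLin A w⟫_ℂ := by
  refine hA.eigenvectorBasis.mul_norm_sq_le_re_inner_apply_self_of_mem_orthogonal_ker
    hA.toEuclideanLin_eigenvectorBasis (fun j hj => ?_) hw
  rw [← eigs_sort_symm hA j] at hj ⊢
  exact hμ _ hj

theorem exists_ne_zero_inner_eq_zero_mem_eigenspace_of_eigs_eq (hA : A.IsHermitian)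
    {i j : Fin N} (hij : i ≠ j) (h : eigs A i = eigs A j) (ψ : EuclideanSpace ℂ (Fin N)) :
    ∃ x ∈ Module.End.eigenspace (Matrix.toEuclideanLin A) (eigs A j : ℂ),
      x ≠ 0 ∧ ⟪ψ, x⟫_ℂ = 0 := by
  have hmem : ∀ k, eigs A k = eigs A j → hA.eigenvectorBasis (Tuple.sort hA.eigenvalues k) ∈
      Module.End.eigenspace (Matrix.toEuclideanLin A) (eigs A j : ℂ) := fun k hk => by
    rw [Module.End.mem_eigenspace_iff, hA.toEuclideanLin_eigenvectorBasis, ← eigs_eq hA, hk]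
    rfl
  exact exists_ne_zero_inner_eq_zero_of_orthonormal hA.eigenvectorBasis.orthonormal
    ((Tuple.sort hA.eigenvalues).injective.ne hij) (hmem i h) (hmem j rfl) ψ

theorem sub_mul_norm_starProjection_orthogonal_le_opNorm {H0 V : Matrix (Fin N) (Fin N) ℂ}
    (hH0 : H0.IsHermitian) {ψ : EuclideanSpace ℂ (Fin N)}
    (hker : LinearMap.ker (Matrix.toEuclideanLin H0) = ℂ ∙ ψ) {μ : ℝ}
    (hμ : ∀ i, eigs H0 i ≠ 0 → μ ≤ eigs H0 i) {Δ : ℝ} (hΔ : 0 ≤ Δ) {lam : ℝ}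
    {g : EuclideanSpace ℂ (Fin N)}
    (hg : Matrix.toEuclideanLin ((Δ : ℂ) • H0 + V) g = (lam : ℂ) • g) :
    (Δ * μ - lam) * ‖(ℂ ∙ ψ)ᗮ.starProjection g‖ ≤ opNorm V * ‖g‖ := by
  have hK : ℂ ∙ ψ ≤ LinearMap.ker (Matrix.toEuclideanLin ((Δ : ℂ) • H0)) := by
    rw [map_smul, ← hker]
    exact LinearMap.ker_le_ker_smul _ _
  have hcoer : ∀ w ∈ (ℂ ∙ ψ)ᗮ,
      Δ * μ * ‖w‖ ^ 2 ≤ RCLike.re ⟪w, Matrix.toEuclideanLin ((Δ : ℂ) • H0) w⟫_ℂ := by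
    intro w hw
    rw [map_smul, LinearMap.smul_apply, inner_smul_right, mul_assoc, RCLike.re_to_complex,
      Complex.re_ofReal_mul]
    exact mul_le_mul_of_nonneg_left
      (mul_norm_sq_le_re_inner_of_mem_orthogonal_ker hH0 hμ (hker ▸ hw)) hΔ
  rw [map_add] at hg
  exact sub_mul_norm_starProjection_orthogonal_le hK hcoer hg

end

theorem ground_state_overlap_bound_general
    (N : ℕ) (hN : 0 < N) (H0 V : Matrix (Fin N) (Fin N) ℂ)
    (hH0 : H0.PosSemidef) (hV : V.IsHermitian)
    (ψ : EuclideanSpace ℂ (Fin N)) (hψ : ‖ψ‖ = 1)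
    (hker : ∀ v : Fin N → ℂ, H0.mulVec v = 0 ↔ ∃ c : ℂ, v = c • ψ)
    (μ : ℝ)
    (hμ : ∀ i : Fin N, eigs H0 i ≠ 0 → μ ≤ eigs H0 i)
    (Δ : ℝ) (hΔ : 0 < Δ) (hgap : 2 * opNorm V < Δ * μ) :
    (∀ i : Fin N, eigs ((Δ : ℂ) • H0 + V) i = eigs ((Δ : ℂ) • H0 + V) ⟨0, hN⟩ →
        i = ⟨0, hN⟩) ∧
    (∀ g : EuclideanSpace ℂ (Fin N), ‖g‖ = 1 →
      ((Δ : ℂ) • H0 + V).mulVec g = ((eigs ((Δ : ℂ) • H0 + V) ⟨0, hN⟩ : ℝ) : ℂ) • g →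
      1 - (opNorm V) ^ 2 / (Δ * μ - opNorm V) ^ 2 ≤ ‖⟪ψ, g⟫_ℂ‖ ^ 2) := by
  have hA : ((Δ : ℂ) • H0 + V).IsHermitian := (hH0.1.smul (by simp [IsSelfAdjoint])).add hV
  have hkerH0 := Matrix.ker_toEuclideanLin_eq_span_singleton hker
  have hH0ψ : Matrix.toEuclideanLin H0 ψ = 0 := by
    rw [← LinearMap.mem_ker, hkerH0]
    exact Submodule.mem_span_singleton_self ψ
  have hlam : eigs ((Δ : ℂ) • H0 + V) ⟨0, hN⟩ ≤ opNorm V :=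
    eigs_zero_le_opNorm hA hN hψ (by rw [map_smul, LinearMap.smul_apply, hH0ψ, smul_zero])
  have hV0 : 0 ≤ opNorm V := norm_nonneg _
  refine ⟨fun i hi => ?_, fun g hg heig => ?_⟩
  · by_contra hi0
    obtain ⟨x, hx, hx0, hψx⟩ :=
      exists_ne_zero_inner_eq_zero_mem_eigenspace_of_eigs_eq hA hi0 hi ψ
    have hx_est := sub_mul_norm_starProjection_orthogonal_le_opNorm hH0.1 hkerH0 hμ hΔ.le
      (Module.End.mem_eigenspace_iff.mp hx)
    rw [Submodule.starProjection_eq_self_iff.mpr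
      (Submodule.mem_orthogonal_singleton_iff_inner_right.mpr hψx)] at hx_est
    have := le_of_mul_le_mul_right hx_est (norm_pos_iff.mpr hx0)
    linarith
  · have hg_est := sub_mul_norm_starProjection_orthogonal_le_opNorm hH0.1 hkerH0 hμ hΔ.le
      (Matrix.toEuclideanLin_eq_smul_iff.mpr heig)
    rw [← div_pow]
    refine one_sub_sq_le_norm_inner_sq hψ hg ?_
    rw [le_div_iff₀ (by linarith), mul_comm]
    nlinarith [norm_nonneg ((ℂ ∙ ψ)ᗮ.starProjection g)]

/-- if `2‖V‖ < Δμ` then `λ_0(Δ H_0 + V)` is non-degenerate and every unit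
ground state `g` satisfies `|⟨ψ, g⟩|² ≥ 1 − ‖V‖²/(Δμ − ‖V‖)²`. -/
theorem ground_state_overlap_bound
    (N : ℕ) (hN : 0 < N) (H0 V : Matrix (Fin N) (Fin N) ℂ)
    (hH0 : H0.PosSemidef) (hV : V.IsHermitian)
    (ψ : EuclideanSpace ℂ (Fin N)) (hψ : ‖ψ‖ = 1)
    (hker : ∀ v : Fin N → ℂ, H0.mulVec v = 0 ↔ ∃ c : ℂ, v = c • ψ)
    (μ : ℝ) (hμpos : 0 < μ)
    (hμ : ∀ i : Fin N, eigs H0 i ≠ 0 → μ ≤ eigs H0 i)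
    (Δ : ℝ) (hΔ : 0 < Δ) (hgap : 2 * opNorm V < Δ * μ) :
    (∀ i : Fin N, eigs ((Δ : ℂ) • H0 + V) i = eigs ((Δ : ℂ) • H0 + V) ⟨0, hN⟩ →
        i = ⟨0, hN⟩) ∧
    (∀ g : EuclideanSpace ℂ (Fin N), ‖g‖ = 1 →
      ((Δ : ℂ) • H0 + V).mulVec g = ((eigs ((Δ : ℂ) • H0 + V) ⟨0, hN⟩ : ℝ) : ℂ) • g →
      1 - (opNorm V) ^ 2 / (Δ * μ - opNorm V) ^ 2 ≤ ‖⟪ψ, g⟫_ℂ‖ ^ 2) :=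
  ground_state_overlap_bound_general N hN H0 V hH0 hV ψ hψ hker μ hμ Δ hΔ hgap
end

section
/- Let c ≥ 1 and n be integers with d = ⌈log₂ c⌉ and n > d. For a bitstring x ∈ {0,1}^{n+1} (bits indexed i = 0, …, n), define f(x) = Σ_{i=0}^{d} 2^i x_i + 2^{d+1} Σ_{i=d+1}^{n} x_i − (c − 1/2). Then the number of bitstrings x ∈ {0,1}^{n+1} with f(x) < 0 is exactly c. -/
/-!
Only the lowest `d + 1` bits can be set when `f(x) < 0`: every higher bit has weight
`2 ^ (d + 1) > c`, while `c ≤ 2 ^ d`. On such bitstrings the weights agree with the binary place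
values `2 ^ i`, so `f(x) < 0` says that `x` is the binary expansion of a number below `c`, and
there are exactly `c` of those.
-/

noncomputable def fz (c n : ℕ) (x : Fin (n + 1) → Bool) : ℝ :=
  (∑ i : Fin (n + 1),
      (if (i : ℕ) ≤ Nat.clog 2 c then (2 : ℝ) ^ (i : ℕ) else 2 ^ (Nat.clog 2 c + 1)) *
        (if x i then 1 else 0))
    - ((c : ℝ) - 1 / 2)

open Finset

def bitValue {ι : Type*} [Fintype ι] (w : ι → ℕ) (x : ι → Bool) : ℕ :=
  ∑ i, w i * (x i).toNat

section BitValue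

variable {ι : Type*} [Fintype ι] {w w' : ι → ℕ} {x : ι → Bool}

lemma le_bitValue_of_eq_true {i : ι} (hi : x i = true) : w i ≤ bitValue w x := by
  have := single_le_sum (f := fun j => w j * (x j).toNat) (fun _ _ => Nat.zero_le _) (mem_univ i)
  simpa [bitValue, hi] using this

lemma bitValue_congr (h : ∀ i, x i = true → w i = w' i) : bitValue w x = bitValue w' x := by
  refine sum_congr rfl fun i _ => ?_
  cases hi : x i
  · simp
  · rw [h i hi]

lemma bitValue_eq_of_lt {B : ℕ} (h : ∀ i, w i < B → w i = w' i) (hx : bitValue w x < B) :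
    bitValue w x = bitValue w' x :=
  bitValue_congr fun i hi => h i ((le_bitValue_of_eq_true hi).trans_lt hx)

lemma bitValue_lt_iff_of_eq_of_lt {B c : ℕ} (hcB : c ≤ B)
    (h : ∀ i, w i < B ∨ w' i < B → w i = w' i) : bitValue w x < c ↔ bitValue w' x < c :=
  ⟨fun hx => bitValue_eq_of_lt (fun i hi => h i (.inl hi)) (hx.trans_le hcB) ▸ hx,
    fun hx => bitValue_eq_of_lt (fun i hi => (h i (.inr hi)).symm) (hx.trans_le hcB) ▸ hx⟩

end BitValue

def binaryEquiv (k : ℕ) : (Fin k → Bool) ≃ Fin (2 ^ k) :=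
  (Equiv.arrowCongr (Equiv.refl _) finTwoEquiv.symm).trans finFunctionFinEquiv

lemma binaryEquiv_apply_val {k : ℕ} (x : Fin k → Bool) :
    (binaryEquiv k x : ℕ) = bitValue (fun i : Fin k => 2 ^ (i : ℕ)) x := by
  rw [binaryEquiv, Equiv.trans_apply, finFunctionFinEquiv_apply, bitValue]
  refine sum_congr rfl fun i _ => ?_
  cases h : x i <;> simp [h, mul_comm] <;> rfl

lemma card_bitValue_two_pow_lt {k c : ℕ} (hc : c ≤ 2 ^ k) :
    Nat.card {x : Fin k → Bool // bitValue (fun i : Fin k => 2 ^ (i : ℕ)) x < c} = c := by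
  rw [Nat.card_congr (Equiv.subtypeEquiv (q := fun m : Fin (2 ^ k) => (m : ℕ) < c) (binaryEquiv k)
      fun x => by rw [binaryEquiv_apply_val]),
    Nat.card_eq_fintype_card]
  exact Fintype.card_fin_lt_of_le hc

def cappedTwoPow (d i : ℕ) : ℕ :=
  if i ≤ d then 2 ^ i else 2 ^ (d + 1)

lemma cappedTwoPow_eq_of_lt {d i : ℕ} (h : cappedTwoPow d i < 2 ^ (d + 1) ∨ 2 ^ i < 2 ^ (d + 1)) :
    cappedTwoPow d i = 2 ^ i := by
  unfold cappedTwoPow at h ⊢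
  split_ifs at h ⊢ with hid
  · rfl
  · have : 2 ^ (d + 1) ≤ 2 ^ i := Nat.pow_le_pow_right two_pos (by omega)
    omega

lemma fz_neg_iff (c n : ℕ) (x : Fin (n + 1) → Bool) :
    fz c n x < 0 ↔
      bitValue (fun i : Fin (n + 1) => cappedTwoPow (Nat.clog 2 c) i) x < c := by
  have hcast : fz c n x = (bitValue (fun i : Fin (n + 1) => cappedTwoPow (Nat.clog 2 c) i) x : ℝ) -
      ((c : ℝ) - 1 / 2) := by
    rw [fz, bitValue]
    unfold cappedTwoPow
    push_cast
    refine congrArg (· - _) (sum_congr rfl fun i _ => ?_)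
    cases x i <;> simp
  rw [hcast]
  generalize bitValue _ x = v
  constructor
  · intro h
    exact_mod_cast (show (v : ℝ) < c by linarith)
  · intro h
    have : (v : ℝ) + 1 ≤ c := by exact_mod_cast h
    linarith

theorem card_negative_energy_bitstrings_general
    (c n : ℕ) (hn : Nat.clog 2 c < n) :
    Nat.card {x : Fin (n + 1) → Bool // fz c n x < 0} = c := by
  set d := Nat.clog 2 c
  have hcd : c ≤ 2 ^ d := Nat.le_pow_clog one_lt_two c
  have hcB : c ≤ 2 ^ (d + 1) := hcd.trans (Nat.pow_le_pow_right two_pos d.le_succ)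
  rw [Nat.card_congr (Equiv.subtypeEquivRight fun x =>
    (fz_neg_iff c n x).trans (bitValue_lt_iff_of_eq_of_lt hcB fun i => cappedTwoPow_eq_of_lt))]
  exact card_bitValue_two_pow_lt (hcd.trans (Nat.pow_le_pow_right two_pos (by omega : d ≤ n + 1)))

/-- exactly `c` bitstrings `x ∈ {0,1}^{n+1}` satisfy `f(x) < 0`. -/
theorem card_negative_energy_bitstrings
    (c n : ℕ) (hc : 1 ≤ c) (hn : Nat.clog 2 c < n) :
    Nat.card {x : Fin (n + 1) → Bool // fz c n x < 0} = c :=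
  card_negative_energy_bitstrings_general c n hn
end

section
/- Let c ≥ 1 and n be integers with d = ⌈log₂ c⌉ and n > d, and define f(x) = Σ_{i=0}^{d} 2^i x_i + 2^{d+1} Σ_{i=d+1}^{n} x_i − (c − 1/2) for x ∈ {0,1}^{n+1}. Then the set of negative values of f is exactly {j − c + 1/2 : j = 0, 1, …, c−1} = {−c + 1/2, −c + 3/2, …, −1/2}, and each of these c values is attained by exactly one bitstring x ∈ {0,1}^{n+1}. In particular the minimum value of f is −c + 1/2 and the largest negative value is −1/2. -/
/-- Natural-number valued version of the weighted sum in `fz`. -/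
def Nv (c n : ℕ) (x : Fin (n + 1) → Bool) : ℕ :=
  ∑ i : Fin (n + 1),
    (if (i : ℕ) ≤ Nat.clog 2 c then 2 ^ (i : ℕ) else 2 ^ (Nat.clog 2 c + 1)) * (x i).toNat

lemma fz_eq (c n : ℕ) (x : Fin (n + 1) → Bool) :
    fz c n x = (Nv c n x : ℝ) - c + 1 / 2 := by
  have h : (∑ i : Fin (n + 1),
      (if (i : ℕ) ≤ Nat.clog 2 c then (2 : ℝ) ^ (i : ℕ) else 2 ^ (Nat.clog 2 c + 1)) *
        (if x i then 1 else 0)) = ((Nv c n x : ℝ)) := by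
    rw [Nv]
    push_cast
    exact Finset.sum_congr rfl fun i _ => by cases hx : x i <;> simp [hx]
  rw [fz, h]; ring

/-- Little-endian binary sum of the first `k` bits of `g`. -/
def binSum (k : ℕ) (g : ℕ → Bool) : ℕ := ∑ i ∈ Finset.range k, 2 ^ i * (g i).toNat

lemma binSum_succ (k : ℕ) (g : ℕ → Bool) :
    binSum (k + 1) g = binSum k g + 2 ^ k * (g k).toNat := by
  simp [binSum, Finset.sum_range_succ]

lemma binSum_lt (k : ℕ) (g : ℕ → Bool) : binSum k g < 2 ^ k := by
  induction k with
  | zero => simp [binSum]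
  | succ k ih =>
    have h1 : (g k).toNat ≤ 1 := Bool.toNat_le (g k)
    have h3 : 2 ^ k * (g k).toNat ≤ 2 ^ k := by
      calc 2 ^ k * (g k).toNat ≤ 2 ^ k * 1 := Nat.mul_le_mul_left _ h1
        _ = 2 ^ k := mul_one _
    have := binSum_succ k g
    have h2 : (2 : ℕ) ^ (k + 1) = 2 ^ k + 2 ^ k := by ring
    omega

lemma binSum_inj (k : ℕ) (g h : ℕ → Bool)
    (heq : binSum k g = binSum k h) : ∀ i < k, g i = h i := by
  induction k with
  | zero => omega
  | succ k ih =>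
    have hg := binSum_lt k g
    have hh := binSum_lt k h
    have h1 := binSum_succ k g
    have h2 := binSum_succ k h
    have hbit : g k = h k := by
      cases hgk : g k <;> cases hhk : h k <;>
        rw [hgk] at h1 <;> rw [hhk] at h2 <;>
        simp only [Bool.toNat_true, Bool.toNat_false, mul_one, mul_zero] at h1 h2 <;>
        first | rfl | omega
    have hlow : binSum k g = binSum k h := by rw [hbit] at h1; omega
    intro i hi
    rcases Nat.lt_succ_iff_lt_or_eq.mp hi with hi' | rfl
    · exact ih hlow i hi'
    · exact hbit

lemma toNat_testBit' (m k : ℕ) : (m.testBit k).toNat = m / 2 ^ k % 2 := by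
  rw [Nat.testBit_eq_decide_div_mod_eq]
  rcases Nat.mod_two_eq_zero_or_one (m / 2 ^ k) with h | h <;> simp [h]

lemma binSum_testBit (k j : ℕ) : binSum k j.testBit = j % 2 ^ k := by
  induction k with
  | zero => simp [binSum, Nat.mod_one]
  | succ k ih =>
    rw [binSum_succ, ih, toNat_testBit', pow_succ, Nat.mod_mul]

/-- the negative values of `f` are exactly `{j − c + 1/2 : 0 ≤ j ≤ c−1}`,
each attained by exactly one bitstring; in particular the minimum value of `f` is
`−c + 1/2` and the largest negative value is `−1/2`. -/
theorem negative_spectrum_of_Hz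
    (c n : ℕ) (hc : 1 ≤ c) (hn : Nat.clog 2 c < n) :
    ({y : ℝ | (∃ x : Fin (n + 1) → Bool, fz c n x = y) ∧ y < 0}
        = {y : ℝ | ∃ j : ℕ, j < c ∧ y = (j : ℝ) - c + 1 / 2}) ∧
    (∀ j : ℕ, j < c → ∃! x : Fin (n + 1) → Bool, fz c n x = (j : ℝ) - c + 1 / 2) ∧
    IsLeast (Set.range (fz c n)) (-(c : ℝ) + 1 / 2) ∧
    IsGreatest {y : ℝ | y ∈ Set.range (fz c n) ∧ y < 0} (-(1 / 2) : ℝ) := by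
  set d := Nat.clog 2 c with hd
  have hcd : c ≤ 2 ^ d := Nat.le_pow_clog (by norm_num) c
  -- any x with a high bit set has Nv ≥ c
  have high_ge : ∀ x : Fin (n + 1) → Bool, (∃ i : Fin (n + 1), d < (i : ℕ) ∧ x i = true) →
      c ≤ Nv c n x := by
    rintro x ⟨i, hdi, hxi⟩
    have hterm : (if (i : ℕ) ≤ d then 2 ^ (i : ℕ) else 2 ^ (d + 1)) * (x i).toNat = 2 ^ (d + 1) := by
      rw [if_neg (by omega), hxi]; simp
    have hle : (if (i : ℕ) ≤ d then 2 ^ (i : ℕ) else 2 ^ (d + 1)) * (x i).toNat ≤ Nv c n x :=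
      Finset.single_le_sum (f := fun i : Fin (n + 1) =>
        (if (i : ℕ) ≤ d then 2 ^ (i : ℕ) else 2 ^ (d + 1)) * (x i).toNat)
        (fun _ _ => Nat.zero_le _) (Finset.mem_univ i)
    have h2 : c ≤ 2 ^ (d + 1) := by
      calc c ≤ 2 ^ d := hcd
        _ ≤ 2 ^ (d + 1) := Nat.pow_le_pow_right (by norm_num) (by omega)
    omega
  -- x with all high bits false: Nv equals a binSum
  have low_eq : ∀ x : Fin (n + 1) → Bool, (∀ i : Fin (n + 1), d < (i : ℕ) → x i = false) →
      Nv c n x = binSum (d + 1) (fun i => if h : i < n + 1 then x ⟨i, h⟩ else false) := by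
    intro x hx
    set g : ℕ → Bool := fun i => if h : i < n + 1 then x ⟨i, h⟩ else false with hg
    have h1 : Nv c n x = ∑ i ∈ Finset.range (n + 1),
        (if i ≤ d then 2 ^ i else 2 ^ (d + 1)) * (g i).toNat := by
      rw [Nv, ← Fin.sum_univ_eq_sum_range
        (fun i => (if i ≤ d then 2 ^ i else 2 ^ (d + 1)) * (g i).toNat)]
      refine Finset.sum_congr rfl fun i _ => ?_
      have hgi : g (i : ℕ) = x i := by simp only [hg]; rw [dif_pos i.isLt]
      rw [← hd, hgi]
    rw [h1, binSum]
    rw [← Finset.sum_subset (Finset.range_subset_range.mpr (by omega : d + 1 ≤ n + 1))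
      (fun i hi hni => by
        have hid : d < i := by simp at hni; omega
        have hin : i < n + 1 := Finset.mem_range.mp hi
        have : g i = false := by simp only [hg]; rw [dif_pos hin]; exact hx ⟨i, hin⟩ hid
        simp [this])]
    exact Finset.sum_congr rfl fun i hi => by
      rw [if_pos (by simpa [Nat.lt_succ_iff] using Finset.mem_range.mp hi)]
  -- the canonical bitstring for j
  have key : ∀ j : ℕ, j < c →
      (Nv c n (fun i : Fin (n + 1) => j.testBit (i : ℕ)) = j ∧
        ∀ x : Fin (n + 1) → Bool, Nv c n x = j →
          x = fun i : Fin (n + 1) => j.testBit (i : ℕ)) := by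
    intro j hj
    have hj2 : j < 2 ^ (d + 1) := by
      have : (2:ℕ) ^ d ≤ 2 ^ (d + 1) := Nat.pow_le_pow_right (by norm_num) (by omega)
      omega
    have hhigh : ∀ i : Fin (n + 1), d < (i : ℕ) → j.testBit (i : ℕ) = false := by
      intro i hi
      exact Nat.testBit_eq_false_of_lt (lt_of_lt_of_le (lt_of_lt_of_le hj hcd)
        (Nat.pow_le_pow_right (by norm_num) (by omega)))
    have hNv : Nv c n (fun i : Fin (n + 1) => j.testBit (i : ℕ)) = j := by
      rw [low_eq _ hhigh]
      have : binSum (d + 1) (fun i => if h : i < n + 1 then j.testBit i else false)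
          = binSum (d + 1) j.testBit := by
        apply Finset.sum_congr rfl
        intro i hi
        have : i < n + 1 := by have := Finset.mem_range.mp hi; omega
        simp [this]
      rw [this, binSum_testBit, Nat.mod_eq_of_lt hj2]
    refine ⟨hNv, fun x hx => ?_⟩
    have hxhigh : ∀ i : Fin (n + 1), d < (i : ℕ) → x i = false := by
      intro i hi
      by_contra hcon
      have : x i = true := by simpa using hcon
      have := high_ge x ⟨i, hi, this⟩
      omega
    have hxb : binSum (d + 1) (fun i => if h : i < n + 1 then x ⟨i, h⟩ else false)
        = binSum (d + 1) j.testBit := by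
      rw [← low_eq x hxhigh, hx, binSum_testBit, Nat.mod_eq_of_lt hj2]
    have hbits := binSum_inj _ _ _ hxb
    funext i
    rcases le_or_gt (i : ℕ) d with hid | hid
    · have := hbits (i : ℕ) (by omega)
      rw [dif_pos i.isLt] at this
      simpa using this
    · rw [hxhigh i hid, hhigh i hid]
  -- relate fz values and Nv values
  have fz_val : ∀ (x : Fin (n + 1) → Bool) (j : ℕ),
      fz c n x = (j : ℝ) - c + 1 / 2 ↔ Nv c n x = j := by
    intro x j
    rw [fz_eq]
    constructor
    · intro h
      have : (Nv c n x : ℝ) = (j : ℝ) := by linarith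
      exact_mod_cast this
    · intro h; rw [h]
  have fz_neg : ∀ x : Fin (n + 1) → Bool, fz c n x < 0 ↔ Nv c n x < c := by
    intro x
    rw [fz_eq]
    constructor
    · intro h
      by_contra hcon
      have : (c : ℝ) ≤ (Nv c n x : ℝ) := by exact_mod_cast not_lt.mp hcon
      linarith
    · intro h
      have h1 : Nv c n x + 1 ≤ c := h
      have : (Nv c n x : ℝ) + 1 ≤ (c : ℝ) := by exact_mod_cast h1
      linarith
  refine ⟨?_, ?_, ?_, ?_⟩
  · -- set equality
    ext y
    simp only [Set.mem_setOf_eq]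
    constructor
    · rintro ⟨⟨x, rfl⟩, hy⟩
      refine ⟨Nv c n x, (fz_neg x).mp hy, ?_⟩
      rw [fz_eq]
    · rintro ⟨j, hj, rfl⟩
      refine ⟨⟨fun i : Fin (n + 1) => j.testBit (i : ℕ), (fz_val _ j).mpr (key j hj).1⟩, ?_⟩
      have h1 : (j : ℝ) + 1 ≤ (c : ℝ) := by exact_mod_cast hj
      linarith
  · -- unique attainment
    intro j hj
    refine ⟨fun i : Fin (n + 1) => j.testBit (i : ℕ), (fz_val _ j).mpr (key j hj).1, fun x hx => ?_⟩
    exact (key j hj).2 x ((fz_val x j).mp hx)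
  · -- IsLeast
    constructor
    · refine ⟨fun _ => false, ?_⟩
      have : Nv c n (fun _ => false) = 0 := by simp [Nv]
      rw [fz_eq, this]; norm_num
    · rintro y ⟨x, rfl⟩
      rw [fz_eq]
      have : (0 : ℝ) ≤ (Nv c n x : ℝ) := Nat.cast_nonneg _
      linarith
  · -- IsGreatest
    constructor
    · constructor
      · have hjc : c - 1 < c := by omega
        refine ⟨fun i : Fin (n + 1) => (c - 1).testBit (i : ℕ), ?_⟩
        rw [(fz_val _ (c - 1)).mpr (key _ hjc).1]
        have : ((c - 1 : ℕ) : ℝ) = (c : ℝ) - 1 := by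
          have h1 : (1:ℕ) ≤ c := hc
          push_cast [h1]
          ring
        rw [this]; ring
      · norm_num
    · rintro y ⟨⟨x, rfl⟩, hy⟩
      have hlt := (fz_neg x).mp hy
      have h1 : Nv c n x + 1 ≤ c := hlt
      have : (Nv c n x : ℝ) + 1 ≤ (c : ℝ) := by exact_mod_cast h1
      rw [fz_eq]
      linarith
end

section
/- Let c ≥ 1 and n be integers with d = ⌈log₂ c⌉ and n > d. Then the set of values attained by g(x) = Σ_{i=0}^{d} 2^i x_i + 2^{d+1} Σ_{i=d+1}^{n} x_i, as x ranges over {0,1}^{n+1}, is exactly the set of integers {0, 1, 2, …, 2^{d+1}(n − d + 1) − 1}; i.e., the spectrum of the unshifted diagonal Hamiltonian consists of all integers from 0 to its maximum, jumping in integer steps of 1. -/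
/-! The weights are `1, 2, …, 2^d` followed by `n - d` copies of `2^(d+1)`, and each weight
exceeds the sum of the weights before it by at most one. For such a sequence the subset sums
fill an initial segment of `ℕ` without gaps: if the subsets of the first `m` weights realise
exactly `0, …, S`, then adding the next weight `w ≤ S + 1` realises `0, …, S` and `w, …, w + S`,
which together form `0, …, S + w`. Here the total weight is `2^(d+1)(n - d + 1) - 1`. -/

/-- The unshifted diagonal Hamiltonian eigenvalue function
`g(x) = Σ_{i=0}^{d} 2^i x_i + 2^{d+1} Σ_{i=d+1}^{n} x_i` on bitstrings `x ∈ {0,1}^{n+1}`,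
where `d = ⌈log₂ c⌉ = Nat.clog 2 c`. -/
def gz (c n : ℕ) (x : Fin (n + 1) → Bool) : ℕ :=
  ∑ i : Fin (n + 1),
    (if (i : ℕ) ≤ Nat.clog 2 c then 2 ^ (i : ℕ) else 2 ^ (Nat.clog 2 c + 1)) *
      (if x i then 1 else 0)

open Finset

def weightedBitSum (w : ℕ → ℕ) {m : ℕ} (x : Fin m → Bool) : ℕ :=
  ∑ i : Fin m, w i * if x i then 1 else 0

theorem weightedBitSum_eq_init_add (w : ℕ → ℕ) {m : ℕ} (x : Fin (m + 1) → Bool) :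
    weightedBitSum w x
      = weightedBitSum w (Fin.init x) + w m * if x (Fin.last m) then 1 else 0 := by
  simp only [weightedBitSum, Fin.sum_univ_castSucc, Fin.val_castSucc, Fin.val_last]
  rfl

theorem weightedBitSum_snoc (w : ℕ → ℕ) {m : ℕ} (x : Fin m → Bool) (b : Bool) :
    weightedBitSum w (Fin.snoc x b : Fin (m + 1) → Bool)
      = weightedBitSum w x + w m * if b then 1 else 0 := by
  rw [weightedBitSum_eq_init_add, Fin.init_snoc, Fin.snoc_last]

theorem range_weightedBitSum (w : ℕ → ℕ) (m : ℕ)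
    (hw : ∀ j < m, w j ≤ ∑ i ∈ range j, w i + 1) :
    Set.range (weightedBitSum w (m := m)) = Set.Iic (∑ i ∈ range m, w i) := by
  induction m with
  | zero =>
    ext k
    simp only [weightedBitSum, univ_eq_empty, sum_empty, Set.mem_range, exists_const, range_zero,
      Set.mem_Iic, nonpos_iff_eq_zero, eq_comm]
  | succ m ih =>
    have ih := ih fun j hj => hw j (by omega)
    have hwm := hw m (by omega)
    ext k
    simp only [Set.mem_range, Set.mem_Iic, sum_range_succ]
    constructor
    · rintro ⟨x, rfl⟩
      have hx : weightedBitSum w (Fin.init x) ∈ Set.range (weightedBitSum w) := ⟨_, rfl⟩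
      rw [ih, Set.mem_Iic] at hx
      rw [weightedBitSum_eq_init_add]
      split <;> omega
    · intro hk
      by_cases hsmall : k ≤ ∑ i ∈ range m, w i
      · obtain ⟨x, hx⟩ : k ∈ Set.range (weightedBitSum w) := by rwa [ih]
        refine ⟨Fin.snoc x false, ?_⟩
        rw [weightedBitSum_snoc, hx, if_neg Bool.false_ne_true, mul_zero, add_zero]
      · obtain ⟨x, hx⟩ : k - w m ∈ Set.range (weightedBitSum w) := by
          rw [ih, Set.mem_Iic]; omega
        exact ⟨Fin.snoc x true, by rw [weightedBitSum_snoc, hx, if_pos rfl, mul_one]; omega⟩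

theorem sum_range_cappedTwoPow_add_one_of_le {d j : ℕ} (hj : j ≤ d + 1) :
    ∑ i ∈ range j, cappedTwoPow d i + 1 = 2 ^ j := by
  induction j with
  | zero => simp
  | succ j ih =>
    rw [sum_range_succ, add_right_comm, ih (by omega), cappedTwoPow, if_pos (by omega)]
    ring

theorem sum_range_cappedTwoPow_add_one_of_ge {d j : ℕ} (hj : d + 1 ≤ j) :
    ∑ i ∈ range j, cappedTwoPow d i + 1 = 2 ^ (d + 1) * (j - d) := by
  induction j, hj using Nat.le_induction with
  | base => rw [sum_range_cappedTwoPow_add_one_of_le le_rfl]; simp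
  | succ j hj ih =>
    rw [sum_range_succ, add_right_comm, ih, cappedTwoPow, if_neg (by omega),
      Nat.sub_add_comm (by omega : d ≤ j)]
    ring

theorem cappedTwoPow_le_sum_range_add_one (d j : ℕ) :
    cappedTwoPow d j ≤ ∑ i ∈ range j, cappedTwoPow d i + 1 := by
  rcases le_or_gt j d with hj | hj
  · rw [sum_range_cappedTwoPow_add_one_of_le (by omega), cappedTwoPow, if_pos hj]
  · rw [sum_range_cappedTwoPow_add_one_of_ge hj, cappedTwoPow, if_neg (by omega)]
    exact Nat.le_mul_of_pos_right _ (by omega)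

theorem range_of_unshifted_diagonal_Hamiltonian_general
    (c n : ℕ) (hn : Nat.clog 2 c < n) :
    Set.range (gz c n)
      = {k : ℕ | k < 2 ^ (Nat.clog 2 c + 1) * (n - Nat.clog 2 c + 1)} := by
  have hgz : gz c n = weightedBitSum (cappedTwoPow (Nat.clog 2 c)) := rfl
  have htotal := sum_range_cappedTwoPow_add_one_of_ge (d := Nat.clog 2 c) (j := n + 1) (by omega)
  rw [Nat.sub_add_comm hn.le] at htotal
  rw [hgz, range_weightedBitSum _ _ fun j _ => cappedTwoPow_le_sum_range_add_one _ j, ← htotal]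
  ext k
  simp only [Set.mem_Iic, Set.mem_ofPred_eq]
  omega

/-- the set of values of `g` is exactly `{0, 1, …, 2^{d+1}(n − d + 1) − 1}`. -/
theorem range_of_unshifted_diagonal_Hamiltonian
    (c n : ℕ) (hc : 1 ≤ c) (hn : Nat.clog 2 c < n) :
    Set.range (gz c n)
      = {k : ℕ | k < 2 ^ (Nat.clog 2 c + 1) * (n - Nat.clog 2 c + 1)} :=
  range_of_unshifted_diagonal_Hamiltonian_general c n hn
end
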